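/- Let R be a strongly ℤ-graded ring with grading 𝒜. Let Y⁻ be a projective R_{≤0}-module, Y⁰ a projective R-module, and Y⁺ a projective R_{≥0}-module; let υ⁻ : Y⁻ → Y⁰ be an R_{≤0}-linear map and υ⁺ : Y⁺ → Y⁰ an R_{≥0}-linear map (where Y⁰ is an R_{≤0}- and R_{≥0}-module by restriction of scalars). If the 𝒜 0-linear map Y⁻ × Y⁺ → Y⁰, (a, b) ↦ υ⁻(a) − υ⁺(b), is surjective, then its kernel is a projective 𝒜 0-module. -/

import Mathlib

universe u

/-- A ℤ-graded ring is *strongly graded* if `𝒜 i * 𝒜 j = 𝒜 (i + j)` for all `i j`. -/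
def IsStronglyGraded {R : Type*} [Ring R] (𝒜 : ℤ → Submodule ℤ R) : Prop :=
  ∀ i j : ℤ, 𝒜 i * 𝒜 j = 𝒜 (i + j)

variable {R : Type*} [Ring R] (𝒜 : ℤ → Submodule ℤ R) [GradedRing 𝒜]

/-- `R_{≤k}`, the sum of the homogeneous components of degree at most `k`. -/
def Rle (k : ℤ) : Submodule ℤ R := ⨆ n ≤ k, 𝒜 n

/-- `R_{≥k}`, the sum of the homogeneous components of degree at least `k`. -/
def Rge (k : ℤ) : Submodule ℤ R := ⨆ n ≥ k, 𝒜 n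

theorem Rle_mul_Rle (a b : ℤ) : Rle 𝒜 a * Rle 𝒜 b ≤ Rle 𝒜 (a + b) := by
  rw [Rle, Rle, Submodule.iSup_mul]
  refine iSup_le fun n => ?_
  rw [Submodule.iSup_mul]
  refine iSup_le fun hn => ?_
  rw [Submodule.mul_iSup]
  refine iSup_le fun m => ?_
  rw [Submodule.mul_iSup]
  refine iSup_le fun hm => ?_
  refine le_trans (Submodule.mul_le.2 fun x hx y hy => SetLike.mul_mem_graded hx hy) ?_
  exact le_iSup₂_of_le (n + m) (add_le_add hn hm) le_rfl

theorem Rge_mul_Rge (a b : ℤ) : Rge 𝒜 a * Rge 𝒜 b ≤ Rge 𝒜 (a + b) := by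
  rw [Rge, Rge, Submodule.iSup_mul]
  refine iSup_le fun n => ?_
  rw [Submodule.iSup_mul]
  refine iSup_le fun hn => ?_
  rw [Submodule.mul_iSup]
  refine iSup_le fun m => ?_
  rw [Submodule.mul_iSup]
  refine iSup_le fun hm => ?_
  refine le_trans (Submodule.mul_le.2 fun x hx y hy => SetLike.mul_mem_graded hx hy) ?_
  exact le_iSup₂_of_le (n + m) (add_le_add hn hm) le_rfl

theorem grade_mem_Rle {k : ℤ} {x : R} (hx : x ∈ 𝒜 k) : x ∈ Rle 𝒜 k :=
  Submodule.mem_iSup_of_mem k (Submodule.mem_iSup_of_mem le_rfl hx)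

theorem grade_mem_Rge {k : ℤ} {x : R} (hx : x ∈ 𝒜 k) : x ∈ Rge 𝒜 k :=
  Submodule.mem_iSup_of_mem k (Submodule.mem_iSup_of_mem le_rfl hx)

/-- The subring `R_{≤0}` of `R`. -/
def RleSubring : Subring R where
  carrier := Rle 𝒜 0
  zero_mem' := zero_mem _
  add_mem' := fun h1 h2 => add_mem h1 h2
  neg_mem' := fun h => neg_mem h
  one_mem' := grade_mem_Rle 𝒜 (SetLike.one_mem_graded 𝒜)
  mul_mem' := fun h1 h2 => by
    simpa using Rle_mul_Rle 𝒜 0 0 (Submodule.mul_mem_mul h1 h2)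

/-- The subring `R_{≥0}` of `R`. -/
def RgeSubring : Subring R where
  carrier := Rge 𝒜 0
  zero_mem' := zero_mem _
  add_mem' := fun h1 h2 => add_mem h1 h2
  neg_mem' := fun h => neg_mem h
  one_mem' := grade_mem_Rge 𝒜 (SetLike.one_mem_graded 𝒜)
  mul_mem' := fun h1 h2 => by
    simpa using Rge_mul_Rge 𝒜 0 0 (Submodule.mul_mem_mul h1 h2)

/-- The inclusion of the subring `𝒜 0` into `R`. -/
def incl0 : (𝒜 0) →+* R where
  toFun a := (a : R)
  map_one' := rfl
  map_mul' _ _ := rfl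
  map_zero' := rfl
  map_add' _ _ := rfl

/-- The inclusion of the subring `𝒜 0` into the subring `R_{≤0}`. -/
def incl0le : (𝒜 0) →+* RleSubring 𝒜 where
  toFun a := ⟨(a : R), grade_mem_Rle 𝒜 a.2⟩
  map_one' := rfl
  map_mul' _ _ := rfl
  map_zero' := rfl
  map_add' _ _ := rfl

/-- The inclusion of the subring `𝒜 0` into the subring `R_{≥0}`. -/
def incl0ge : (𝒜 0) →+* RgeSubring 𝒜 where
  toFun a := ⟨(a : R), grade_mem_Rge 𝒜 a.2⟩
  map_one' := rfl
  map_mul' _ _ := rfl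
  map_zero' := rfl
  map_add' _ _ := rfl

/-- Restriction of scalars along `𝒜 0 → R`. -/
instance restrictFromR (M : Type u) [AddCommMonoid M] [Module R M] :
    Module (𝒜 0) M :=
  Module.compHom M (incl0 𝒜)

/-- Restriction of scalars along `𝒜 0 → R_{≤0}`. -/
instance restrictFromRle (M : Type u) [AddCommMonoid M] [Module (RleSubring 𝒜) M] :
    Module (𝒜 0) M :=
  Module.compHom M (incl0le 𝒜)

/-- Restriction of scalars along `𝒜 0 → R_{≥0}`. -/
instance restrictFromRge (M : Type u) [AddCommMonoid M] [Module (RgeSubring 𝒜) M] :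
    Module (𝒜 0) M :=
  Module.compHom M (incl0ge 𝒜)

/-- Restriction of scalars along `R_{≤0} → R`. -/
instance moduleRleOfR (M : Type u) [AddCommMonoid M] [Module R M] :
    Module (RleSubring 𝒜) M :=
  Module.compHom M (RleSubring 𝒜).subtype

/-- Restriction of scalars along `R_{≥0} → R`. -/
instance moduleRgeOfR (M : Type u) [AddCommMonoid M] [Module R M] :
    Module (RgeSubring 𝒜) M :=
  Module.compHom M (RgeSubring 𝒜).subtype

/-! Strong grading gives, for every `n`, elements `aᵢ ∈ 𝒜 (-n)` and `bᵢ ∈ 𝒜 n` with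
`∑ aᵢ bᵢ = 1`; then `x ↦ ∑ (x aᵢ) • bᵢ` exhibits `𝒜 n` as a direct summand of a free
`𝒜 0`-module. So every grade is `𝒜 0`-projective, hence so are `R`, `R_{≤0}` and `R_{≥0}`,
being direct sums of grades, and so are `Y⁻`, `Y⁰`, `Y⁺` by transitivity of projectivity along
restriction of scalars. Finally a surjection onto a projective module splits, so its kernel is a
direct summand of the projective module `Y⁻ × Y⁺`. -/

theorem Module.Projective.trans {A B M : Type*} [Ring A] [Ring B] [Module A B]
    [IsScalarTower A B B] [AddCommGroup M] [Module B M] [Module A M] [IsScalarTower A B M]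
    [Module.Projective A B] [Module.Projective B M] : Module.Projective A M := by
  classical
  obtain ⟨s, hs⟩ := Module.projective_def'.1 ‹Module.Projective B M›
  have : Module.Projective A (M →₀ B) := .of_equiv' (finsuppLequivDFinsupp A).symm
  exact .of_split (s.restrictScalars A) ((Finsupp.linearCombination B id).restrictScalars A)
    (LinearMap.ext fun m => LinearMap.congr_fun hs m)

theorem Module.Projective.ker_of_surjective {A M N : Type*} [Ring A] [AddCommGroup M]
    [Module A M] [AddCommGroup N] [Module A N] [Module.Projective A M] [Module.Projective A N]
    (f : M →ₗ[A] N) (hf : Function.Surjective f) : Module.Projective A (LinearMap.ker f) := by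
  obtain ⟨σ, hσ⟩ := Module.projective_lifting_property f LinearMap.id hf
  let π : M →ₗ[A] M := LinearMap.id - σ ∘ₗ f
  have hπ (x : M) : π x ∈ LinearMap.ker f := by
    simp [π, ← LinearMap.comp_apply f σ, hσ]
  exact .of_split (LinearMap.ker f).subtype (π.codRestrict _ hπ)
    (LinearMap.ext fun x => Subtype.ext <| by simp [π])

namespace DirectSum.IsInternal

variable {A M ι : Type*} [Ring A] [AddCommGroup M] [Module A M] [DecidableEq ι]
  {p : ι → Submodule A M} [∀ i, Module.Projective A (p i)]

theorem projective (hp : IsInternal p) : Module.Projective A M :=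
  .of_equiv' (LinearEquiv.ofBijective (coeLinearMap p) hp)

theorem projective_biSup (hp : IsInternal p) (S : Set ι) :
    Module.Projective A ↥(⨆ i ∈ S, p i) :=
  have (i : S) : Module.Projective A ((p i).comap (⨆ i ∈ S, p i).subtype) :=
    .of_equiv' (Submodule.comapSubtypeEquivOfLe (le_biSup p i.2)).symm
  projective <| isInternal_biSup_submodule_of_iSupIndep S <|
    hp.submodule_iSupIndep.comp Subtype.val_injective

end DirectSum.IsInternal

def gradeSubmodule (n : ℤ) : Submodule (𝒜 0) R where
  carrier := 𝒜 n
  add_mem' := add_mem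
  zero_mem' := zero_mem _
  smul_mem' c x hx := by
    show (c : R) * x ∈ 𝒜 n
    simpa using SetLike.mul_mem_graded c.2 hx

theorem isInternal_gradeSubmodule : DirectSum.IsInternal (gradeSubmodule 𝒜) :=
  DirectSum.Decomposition.isInternal 𝒜

theorem mem_biSup_gradeSubmodule (S : Set ℤ) (x : R) :
    x ∈ ⨆ n ∈ S, gradeSubmodule 𝒜 n ↔ x ∈ ⨆ n ∈ S, 𝒜 n := by
  rw [← Submodule.restrictScalars_mem ℤ]
  simp only [Submodule.restrictScalars_iSup]
  rfl

theorem projective_gradeSubmodule_of_one_mem_mul {n : ℤ} (h1 : (1 : R) ∈ 𝒜 (-n) * 𝒜 n) :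
    Module.Projective (𝒜 0) (gradeSubmodule 𝒜 n) := by
  let P := gradeSubmodule 𝒜 n
  -- `r = 1` is the splitting we want; general `r` is what survives induction on `𝒜 (-n) * 𝒜 n`.
  suffices ∀ r ∈ 𝒜 (-n) * 𝒜 n, ∃ s : P →ₗ[𝒜 0] P →₀ 𝒜 0,
      ∀ x : P, (Finsupp.linearCombination (𝒜 0) (id : P → P) (s x) : R) = x * r by
    obtain ⟨s, hs⟩ := this 1 h1
    exact Module.projective_def'.2
      ⟨s, LinearMap.ext fun x => Subtype.ext ((hs x).trans (mul_one _))⟩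
  intro r hr
  induction hr using Submodule.mul_induction_on' with
  | mem_mul_mem a ha b hb =>
    let mulRight : P →ₗ[𝒜 0] 𝒜 0 :=
      { toFun x := ⟨x * a, by simpa using SetLike.mul_mem_graded x.2 ha⟩
        map_add' x y := Subtype.ext (add_mul (x : R) y a)
        map_smul' c x := Subtype.ext (mul_assoc (c : R) x a) }
    refine ⟨Finsupp.lsingle ⟨b, hb⟩ ∘ₗ mulRight, fun x => ?_⟩
    simp only [LinearMap.comp_apply, Finsupp.lsingle_apply, Finsupp.linearCombination_single]
    exact mul_assoc (x : R) a b
  | add r₁ _ r₂ _ h₁ h₂ =>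
    obtain ⟨s₁, hs₁⟩ := h₁
    obtain ⟨s₂, hs₂⟩ := h₂
    exact ⟨s₁ + s₂, fun x => by simp [mul_add, hs₁, hs₂]⟩

variable {𝒜} in
theorem IsStronglyGraded.projective_gradeSubmodule (h : IsStronglyGraded 𝒜) (n : ℤ) :
    Module.Projective (𝒜 0) (gradeSubmodule 𝒜 n) :=
  projective_gradeSubmodule_of_one_mem_mul 𝒜 <| by
    rw [h, neg_add_cancel]
    exact SetLike.one_mem_graded 𝒜

variable {𝒜} in
theorem IsStronglyGraded.projective (h : IsStronglyGraded 𝒜) : Module.Projective (𝒜 0) R :=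
  have := h.projective_gradeSubmodule
  (isInternal_gradeSubmodule 𝒜).projective

variable {𝒜} in
theorem IsStronglyGraded.projective_subring (h : IsStronglyGraded 𝒜) (S : Set ℤ) {T : Subring R}
    [Module (𝒜 0) T] (hsmul : ∀ (c : 𝒜 0) (t : T), ((c • t : T) : R) = c * t)
    (hT : ∀ x, x ∈ T ↔ x ∈ ⨆ n ∈ S, 𝒜 n) : Module.Projective (𝒜 0) T :=
  have := h.projective_gradeSubmodule
  have := (isInternal_gradeSubmodule 𝒜).projective_biSup S
  .of_equiv' <| LinearEquiv.symm
    { toFun t := ⟨t, (mem_biSup_gradeSubmodule 𝒜 S t).2 ((hT t).1 t.2)⟩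
      invFun x := ⟨x, (hT x).2 ((mem_biSup_gradeSubmodule 𝒜 S x).1 x.2)⟩
      map_add' _ _ := rfl
      map_smul' c t := Subtype.ext (hsmul c t)
      left_inv _ := rfl
      right_inv _ := rfl : T ≃ₗ[𝒜 0] ↥(⨆ n ∈ S, gradeSubmodule 𝒜 n) }

instance (M : Type*) [AddCommMonoid M] [Module R M] : IsScalarTower (𝒜 0) R M :=
  ⟨fun a b m => mul_smul (a : R) b m⟩

instance (M : Type*) [AddCommMonoid M] [Module (RleSubring 𝒜) M] :
    IsScalarTower (𝒜 0) (RleSubring 𝒜) M :=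
  ⟨fun a b m => mul_smul (incl0le 𝒜 a) b m⟩

instance (M : Type*) [AddCommMonoid M] [Module (RgeSubring 𝒜) M] :
    IsScalarTower (𝒜 0) (RgeSubring 𝒜) M :=
  ⟨fun a b m => mul_smul (incl0ge 𝒜 a) b m⟩

set_option synthInstance.maxHeartbeats 1000000 in
theorem ker_difference_projective (h : IsStronglyGraded 𝒜)
    (Yneg Yzero Ypos : Type u) [AddCommGroup Yneg] [AddCommGroup Yzero] [AddCommGroup Ypos]
    [Module (RleSubring 𝒜) Yneg] [Module R Yzero] [Module (RgeSubring 𝒜) Ypos]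
    (hYm : Module.Projective (RleSubring 𝒜) Yneg)
    (hY0 : Module.Projective R Yzero)
    (hYp : Module.Projective (RgeSubring 𝒜) Ypos)
    (F : (Yneg × Ypos) →ₗ[𝒜 0] Yzero)
    (hsurj : Function.Surjective F) :
    Module.Projective (𝒜 0) ↥(LinearMap.ker F) := by
  have := h.projective
  have := h.projective_subring (Set.Iic 0) (T := RleSubring 𝒜) (fun _ _ => rfl) (fun _ => Iff.rfl)
  have := h.projective_subring (Set.Ici 0) (T := RgeSubring 𝒜) (fun _ _ => rfl) (fun _ => Iff.rfl)
  have : Module.Projective (𝒜 0) Yneg := .trans (B := RleSubring 𝒜)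
  have : Module.Projective (𝒜 0) Yzero := .trans (B := R)
  have : Module.Projective (𝒜 0) Ypos := .trans (B := RgeSubring 𝒜)
  exact .ker_of_surjective F hsurj
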